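/- Consider the system ẋ = (1/τ₁)·sin(2θ), θ̇ = ω − K·(x + (τ₂/τ₁)·sin(2θ)) with τ₁, τ₂, K > 0 and arbitrary real ω. Then along every global solution, V(x(t), θ(t)) = (Kτ₁/2)(x(t) − ω/K)² + (1 − cos 2θ(t))/2 is nonincreasing and converges to a finite limit as t → ∞. -/

import Mathlib

/-!
`V` is a Lyapunov function: along the flow its derivative is `-(K τ₂ / τ₁) sin² (2θ) ≤ 0`, the
cross terms `± K (x - ω / K) sin (2θ)` from the two summands cancelling. Hence `V` is antitone,
and being nonnegative it converges to its infimum.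
-/

open Real

noncomputable def costasLyapunov (K τ₁ ω x θ : ℝ) : ℝ :=
  K * τ₁ / 2 * (x - ω / K) ^ 2 + (1 - cos (2 * θ)) / 2

lemma costasLyapunov_nonneg {K τ₁ : ℝ} (hKτ₁ : 0 ≤ K * τ₁) (ω x θ : ℝ) :
    0 ≤ costasLyapunov K τ₁ ω x θ := by
  unfold costasLyapunov
  have hquad : 0 ≤ K * τ₁ / 2 * (x - ω / K) ^ 2 := by positivity
  linarith [cos_le_one (2 * θ)]

lemma hasDerivAt_costasLyapunov {τ₁ τ₂ K ω : ℝ} (hτ₁ : τ₁ ≠ 0) (hK : K ≠ 0) {x θ : ℝ → ℝ}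
    {t : ℝ} (hx : HasDerivAt x ((1 / τ₁) * sin (2 * θ t)) t)
    (hθ : HasDerivAt θ (ω - K * (x t + (τ₂ / τ₁) * sin (2 * θ t))) t) :
    HasDerivAt (fun s => costasLyapunov K τ₁ ω (x s) (θ s))
      (-(K * τ₂ / τ₁) * sin (2 * θ t) ^ 2) t := by
  have hquad := ((hx.sub_const (ω / K)).fun_pow 2).const_mul (K * τ₁ / 2)
  have hcos := ((hasDerivAt_const t (1 : ℝ)).sub (hθ.const_mul 2).cos).div_const 2
  refine (hquad.add hcos).congr_deriv ?_
  push_cast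
  field_simp
  ring

theorem costas_lyapunov_nonincreasing_and_convergent
    (τ₁ τ₂ K ω : ℝ) (hτ₁ : 0 < τ₁) (hτ₂ : 0 < τ₂) (hK : 0 < K)
    (x θ : ℝ → ℝ)
    (hx : ∀ t, HasDerivAt x ((1/τ₁) * Real.sin (2 * θ t)) t)
    (hθ : ∀ t, HasDerivAt θ (ω - K * (x t + (τ₂/τ₁) * Real.sin (2 * θ t))) t)
    (V : ℝ → ℝ)
    (hV : V = fun t => K * τ₁ / 2 * (x t - ω/K)^2 + (1 - Real.cos (2 * θ t)) / 2) :
    AntitoneOn V (Set.Ici 0) ∧ ∃ L : ℝ, Filter.Tendsto V Filter.atTop (nhds L) := by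
  change V = fun t => costasLyapunov K τ₁ ω (x t) (θ t) at hV
  subst hV
  have hanti : Antitone fun t => costasLyapunov K τ₁ ω (x t) (θ t) :=
    antitone_of_hasDerivAt_nonpos
      (fun t => hasDerivAt_costasLyapunov hτ₁.ne' hK.ne' (hx t) (hθ t))
      (fun t => mul_nonpos_of_nonpos_of_nonneg
        (neg_nonpos.mpr (by positivity)) (sq_nonneg _))
  have hbdd : BddBelow (Set.range fun t => costasLyapunov K τ₁ ω (x t) (θ t)) := by
    refine ⟨0, ?_⟩
    rintro _ ⟨t, rfl⟩
    exact costasLyapunov_nonneg (mul_pos hK hτ₁).le ω (x t) (θ t)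
  exact ⟨hanti.antitoneOn _, _, tendsto_atTop_ciInf hanti hbdd⟩
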